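/- arXiv:1805.08953 — 5 statements merged into one kernel-verified Lean document; each statement's English description precedes it below -/
import Mathlib

section
/- Every finite directed graph with m edges contains a transitive subgraph with at least m/4 edges. -/
/-- Toggling membership of `x`: for any predicate `P` on finsets unaffected by `x`,
the classes with `x ∈ S` and `x ∉ S` have equal cardinality. -/
lemma toggle_card {V : Type*} [Fintype V] [DecidableEq V] (x : V)
    (P : Finset V → Prop) [DecidablePred P]
    (hP : ∀ S, P (insert x S) ↔ P S) (hP' : ∀ S, P (S.erase x) ↔ P S) :
    (Finset.univ.filter fun S : Finset V => P S ∧ x ∈ S).card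
      = (Finset.univ.filter fun S : Finset V => P S ∧ x ∉ S).card := by
  refine Finset.card_nbij' (fun S => S.erase x) (fun S => insert x S) ?_ ?_ ?_ ?_
  · intro S hS
    simp only [Finset.mem_coe, Finset.mem_filter, Finset.mem_univ, true_and] at hS ⊢
    exact ⟨(hP' S).2 hS.1, fun h => (Finset.mem_erase.1 h).1 rfl⟩
  · intro S hS
    simp only [Finset.mem_coe, Finset.mem_filter, Finset.mem_univ, true_and] at hS ⊢
    exact ⟨(hP _).2 hS.1, Finset.mem_insert_self _ _⟩
  · intro S hS
    simp only [Finset.mem_coe, Finset.mem_filter, Finset.mem_univ, true_and] at hS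
    exact Finset.insert_erase hS.2
  · intro S hS
    simp only [Finset.mem_coe, Finset.mem_filter, Finset.mem_univ, true_and] at hS
    exact Finset.erase_insert hS.2

/-- For distinct vertices `a ≠ b`, exactly a quarter of all vertex subsets `S`
satisfy `a ∈ S ∧ b ∉ S`. -/
lemma quarter_card {V : Type*} [Fintype V] [DecidableEq V] {a b : V} (hab : a ≠ b) :
    Fintype.card (Finset V)
      = 4 * (Finset.univ.filter fun S : Finset V => a ∈ S ∧ b ∉ S).card := by
  have h1 : (Finset.univ.filter fun S : Finset V => a ∈ S ∧ b ∈ S).card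
      = (Finset.univ.filter fun S : Finset V => a ∈ S ∧ b ∉ S).card := by
    have := toggle_card b (fun S : Finset V => a ∈ S)
      (fun S => by simp [Finset.mem_insert, hab])
      (fun S => by simp [Finset.mem_erase, hab])
    simpa using this
  have h2 : (Finset.univ.filter fun S : Finset V => a ∉ S ∧ b ∈ S).card
      = (Finset.univ.filter fun S : Finset V => a ∉ S ∧ b ∉ S).card := by
    have := toggle_card b (fun S : Finset V => a ∉ S)
      (fun S => by simp [Finset.mem_insert, hab])
      (fun S => by simp [Finset.mem_erase, hab])
    simpa using this
  have h3 : (Finset.univ.filter fun S : Finset V => a ∈ S ∧ b ∉ S).card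
      = (Finset.univ.filter fun S : Finset V => a ∉ S ∧ b ∉ S).card := by
    have := toggle_card a (fun S : Finset V => b ∉ S)
      (fun S => by simp [Finset.mem_insert, Ne.symm hab])
      (fun S => by simp [Finset.mem_erase, Ne.symm hab])
    simpa [and_comm] using this
  have split : ∀ (p q : Finset V → Prop) [DecidablePred p] [DecidablePred q],
      (Finset.univ.filter fun S : Finset V => p S).card
        = (Finset.univ.filter fun S => p S ∧ q S).card
          + (Finset.univ.filter fun S => p S ∧ ¬ q S).card := by
    intro p q _ _
    rw [← Finset.filter_filter, ← Finset.filter_filter,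
      Finset.card_filter_add_card_filter_not]
  have htot : Fintype.card (Finset V)
      = (Finset.univ.filter fun S : Finset V => a ∈ S).card
        + (Finset.univ.filter fun S : Finset V => a ∉ S).card := by
    rw [Finset.card_filter_add_card_filter_not, Finset.card_univ]
  rw [htot, split (fun S => a ∈ S) (fun S => b ∈ S),
    split (fun S => a ∉ S) (fun S => b ∈ S), h1, h2, ← h3]
  omega

/-- Every finite directed graph with `m` arcs contains a transitive subgraph
(a subset of the arcs closed under composition) with at least `m/4` arcs. -/
theorem stmt_1 {V : Type*} [Fintype V] [DecidableEq V] (D : Finset (V × V)) :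
    ∃ T ⊆ D, (∀ a b c : V, (a, b) ∈ T → (b, c) ∈ T → (a, c) ∈ T) ∧
      D.card ≤ 4 * T.card := by
  classical
  -- split `D` into loops `L` and non-loops `N`
  set L : Finset (V × V) := D.filter (fun p => p.1 = p.2) with hLdef
  set N : Finset (V × V) := D.filter (fun p => ¬ p.1 = p.2) with hNdef
  have hcardD : L.card + N.card = D.card :=
    Finset.card_filter_add_card_filter_not _
  -- counting argument: some vertex subset `S` captures a quarter of the non-loops
  set cnt : Finset V → ℕ := fun S => (N.filter fun p => p.1 ∈ S ∧ p.2 ∉ S).card with hcnt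
  have hsum : ∑ S : Finset V, cnt S
      = ∑ p ∈ N, (Finset.univ.filter fun S : Finset V => p.1 ∈ S ∧ p.2 ∉ S).card := by
    simp_rw [hcnt, Finset.card_filter]
    exact Finset.sum_comm
  have h4 : 4 * ∑ S : Finset V, cnt S = Fintype.card (Finset V) * N.card := by
    rw [hsum, Finset.mul_sum]
    rw [Finset.sum_congr rfl (fun p hp => ?_), Finset.sum_const, smul_eq_mul, mul_comm]
    have hab : p.1 ≠ p.2 := (Finset.mem_filter.1 hp).2
    exact (quarter_card hab).symm
  have hex : ∃ S : Finset V, N.card ≤ 4 * cnt S := by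
    have hne : (Finset.univ : Finset (Finset V)).Nonempty := ⟨∅, Finset.mem_univ _⟩
    have hle : ∑ _S : Finset V, N.card ≤ ∑ S : Finset V, 4 * cnt S := by
      rw [← Finset.mul_sum, h4, Finset.sum_const, smul_eq_mul, Finset.card_univ]
    obtain ⟨S, _, hS⟩ := Finset.exists_le_of_sum_le hne hle
    exact ⟨S, hS⟩
  obtain ⟨S, hS⟩ := hex
  refine ⟨L ∪ N.filter (fun p => p.1 ∈ S ∧ p.2 ∉ S), ?_, ?_, ?_⟩
  · intro p hp
    rcases Finset.mem_union.1 hp with h | h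
    · exact (Finset.mem_filter.1 h).1
    · exact (Finset.mem_filter.1 (Finset.mem_filter.1 h).1).1
  · intro a b c hab hbc
    rcases Finset.mem_union.1 hab with h | h
    · have : a = b := (Finset.mem_filter.1 h).2
      subst this; exact hbc
    · rcases Finset.mem_union.1 hbc with h' | h'
      · have : b = c := (Finset.mem_filter.1 h').2
        subst this; exact hab
      · exact absurd (Finset.mem_filter.1 h').2.1 (Finset.mem_filter.1 h).2.2
  · have hdisj : Disjoint L (N.filter (fun p => p.1 ∈ S ∧ p.2 ∉ S)) := by
      rw [Finset.disjoint_left]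
      intro p hpL hpN
      exact (Finset.mem_filter.1 (Finset.mem_filter.1 hpN).1).2 (Finset.mem_filter.1 hpL).2
    rw [Finset.card_union_of_disjoint hdisj]
    have : (N.filter fun p => p.1 ∈ S ∧ p.2 ∉ S).card = cnt S := rfl
    omega
end

section
/- If D is a directed graph whose underlying undirected graph is triangle-free, then a set of arcs of D is a maximum transitive subgraph if and only if it is a maximum directed cut, and their sizes coincide; in particular the maximum size of a transitive subgraph of D equals the maximum size of a directed cut of D. -/
/-- For a loopless digraph `D` whose underlying undirected graph is triangle-free,
a set of arcs of `D` is a maximum transitive subgraph if and only if it is a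
maximum directed cut; in particular the maximum size of a transitive subgraph of
`D` equals the maximum size of a directed cut of `D`. -/
theorem stmt_4 {V : Type*} [Fintype V] [DecidableEq V] (D : Finset (V × V))
    (hirr : ∀ a : V, (a, a) ∉ D)
    (htf : ∀ a b c : V, a ≠ b → b ≠ c → a ≠ c →
      ¬ (((a, b) ∈ D ∨ (b, a) ∈ D) ∧ ((b, c) ∈ D ∨ (c, b) ∈ D) ∧
         ((a, c) ∈ D ∨ (c, a) ∈ D))) :
    (∀ T ⊆ D,
      (((∀ a b c : V, (a, b) ∈ T → (b, c) ∈ T → (a, c) ∈ T) ∧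
          ∀ T' ⊆ D, (∀ a b c : V, (a, b) ∈ T' → (b, c) ∈ T' → (a, c) ∈ T') →
            T'.card ≤ T.card)
        ↔
        ((∃ U : Finset V, T = D.filter fun p => p.1 ∈ U ∧ p.2 ∉ U) ∧
          ∀ U : Finset V, (D.filter fun p => p.1 ∈ U ∧ p.2 ∉ U).card ≤ T.card)))
    ∧
    sSup {n : ℕ | ∃ T ⊆ D,
        (∀ a b c : V, (a, b) ∈ T → (b, c) ∈ T → (a, c) ∈ T) ∧ T.card = n}
      = sSup {n : ℕ |
          ∃ U : Finset V, (D.filter fun p => p.1 ∈ U ∧ p.2 ∉ U).card = n} := by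
  -- A transitive subset of D has no directed path of length two.
  have key : ∀ T : Finset (V × V), T ⊆ D →
      (∀ a b c : V, (a, b) ∈ T → (b, c) ∈ T → (a, c) ∈ T) →
      ∀ a b c : V, (a, b) ∈ T → (b, c) ∈ T → False := by
    intro T hTD htr a b c hab hbc
    have hab' := hTD hab
    have hbc' := hTD hbc
    have hne1 : a ≠ b := by rintro rfl; exact hirr a hab'
    have hne2 : b ≠ c := by rintro rfl; exact hirr b hbc'
    have hne3 : a ≠ c := by rintro rfl; exact hirr a (hTD (htr a b a hab hbc))
    exact htf a b c hne1 hne2 hne3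
      ⟨Or.inl hab', Or.inl hbc', Or.inl (hTD (htr a b c hab hbc))⟩
  -- Every directed cut is transitive.
  have cutTrans : ∀ U : Finset V, ∀ a b c : V,
      (a, b) ∈ D.filter (fun p => p.1 ∈ U ∧ p.2 ∉ U) →
      (b, c) ∈ D.filter (fun p => p.1 ∈ U ∧ p.2 ∉ U) →
      (a, c) ∈ D.filter (fun p => p.1 ∈ U ∧ p.2 ∉ U) := by
    intro U a b c hab hbc
    simp only [Finset.mem_filter] at hab hbc
    exact absurd hbc.2.1 hab.2.2
  -- Every transitive subset of D is contained in a directed cut.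
  have subCut : ∀ T : Finset (V × V), T ⊆ D →
      (∀ a b c : V, (a, b) ∈ T → (b, c) ∈ T → (a, c) ∈ T) →
      T ⊆ D.filter (fun p => p.1 ∈ T.image Prod.fst ∧ p.2 ∉ T.image Prod.fst) := by
    intro T hTD htr p hp
    refine Finset.mem_filter.mpr ⟨hTD hp, ?_, ?_⟩
    · exact Finset.mem_image.mpr ⟨p, hp, rfl⟩
    · intro hmem
      obtain ⟨q, hq, hq2⟩ := Finset.mem_image.mp hmem
      exact key T hTD htr p.1 p.2 q.2 (by rwa [Prod.mk.eta])
        (by rw [← hq2, Prod.mk.eta]; exact hq)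
  constructor
  · intro T hTD
    constructor
    · rintro ⟨htr, hmax⟩
      have hsub := subCut T hTD htr
      set U := T.image Prod.fst with hU
      have hcut := cutTrans U
      have hle : (D.filter (fun p => p.1 ∈ U ∧ p.2 ∉ U)).card ≤ T.card :=
        hmax _ (Finset.filter_subset _ _) hcut
      have heq : T = D.filter (fun p => p.1 ∈ U ∧ p.2 ∉ U) :=
        Finset.eq_of_subset_of_card_le hsub hle
      refine ⟨⟨U, heq⟩, ?_⟩
      intro U'
      exact hmax _ (Finset.filter_subset _ _) (cutTrans U')
    · rintro ⟨⟨U, hTU⟩, hmax⟩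
      refine ⟨hTU ▸ cutTrans U, ?_⟩
      intro T' hT'D htr'
      calc T'.card ≤ (D.filter (fun p => p.1 ∈ T'.image Prod.fst ∧
            p.2 ∉ T'.image Prod.fst)).card :=
          Finset.card_le_card (subCut T' hT'D htr')
        _ ≤ T.card := hmax _
  · apply le_antisymm
    · apply csSup_le
      · exact ⟨0, ∅, Finset.empty_subset D, by simp, rfl⟩
      · rintro n ⟨T, hTD, htr, rfl⟩
        have hbdd : BddAbove {n : ℕ |
            ∃ U : Finset V, (D.filter fun p => p.1 ∈ U ∧ p.2 ∉ U).card = n} := by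
          refine ⟨D.card, ?_⟩
          rintro m ⟨U, rfl⟩
          exact Finset.card_le_card (Finset.filter_subset _ _)
        refine le_trans (Finset.card_le_card (subCut T hTD htr)) ?_
        exact le_csSup hbdd ⟨_, rfl⟩
    · apply csSup_le
      · exact ⟨(D.filter fun p => p.1 ∈ (∅ : Finset V) ∧ p.2 ∉ (∅ : Finset V)).card,
          ∅, rfl⟩
      · rintro n ⟨U, rfl⟩
        have hbdd : BddAbove {n : ℕ | ∃ T ⊆ D,
            (∀ a b c : V, (a, b) ∈ T → (b, c) ∈ T → (a, c) ∈ T) ∧ T.card = n} := by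
          refine ⟨D.card, ?_⟩
          rintro m ⟨T, hTD, _, rfl⟩
          exact Finset.card_le_card hTD
        exact le_csSup hbdd ⟨_, Finset.filter_subset _ _, cutTrans U, rfl⟩
end

section
/- Let G be an undirected graph on n vertices with m edges, and let δ > 0 and k ≤ m satisfy n < kδ²/6. Then there exists an orientation H of G such that every cut of H of size at least k is δ-balanced. -/
open SimpleGraph

namespace Stmt6Aux

variable {V : Type*} [Fintype V] [DecidableEq V]

/-- out-degree of `w` in the arc set `H`. -/
def outd (H : Finset (V × V)) (w : V) : ℕ := (H.filter fun p => p.1 = w).card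

/-- in-degree of `w` in the arc set `H`. -/
def ind (H : Finset (V × V)) (w : V) : ℕ := (H.filter fun p => p.2 = w).card

lemma dart_countP {G : SimpleGraph V} {u v : V} (p : G.Walk u v) (w : V) :
    (p.darts.countP (fun d => d.toProd.1 = w) : ℤ) -
      (p.darts.countP (fun d => d.toProd.2 = w) : ℤ) =
      (if u = w then 1 else 0) - (if v = w then 1 else 0) := by
  induction p with
  | nil => simp
  | @cons a b c h q ih =>
    simp only [Walk.darts_cons, List.countP_cons]
    push_cast
    by_cases h1 : a = w <;> by_cases h2 : b = w <;>
      simp only [h1, h2] at ih ⊢ <;> simp_all <;> omega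

lemma card_filter_toFinset {α : Type*} [DecidableEq α] (l : List α) (hl : l.Nodup)
    (q : α → Prop) [DecidablePred q] :
    (l.toFinset.filter q).card = l.countP (fun a => decide (q a)) := by
  have h1 : l.toFinset.filter q = (l.filter (fun a => decide (q a))).toFinset := by
    ext a
    simp [List.mem_filter]
  rw [h1, List.toFinset_card_of_nodup (hl.filter _), ← List.countP_eq_length_filter]

lemma exists_balanced_orientation_aux :
    ∀ (n : ℕ) (G : SimpleGraph V), G.edgeSet.ncard ≤ n →
    ∃ H : Finset (V × V),
      (∀ x ∈ H, G.Adj x.1 x.2) ∧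
      (∀ a b : V, G.Adj a b → ((a, b) ∈ H ↔ (b, a) ∉ H)) ∧
      ∀ w : V, |(outd H w : ℤ) - (ind H w : ℤ)| ≤ 1 := by
  classical
  have empty_case : ∀ (G : SimpleGraph V), G.edgeSet = ∅ →
      ∃ H : Finset (V × V),
        (∀ x ∈ H, G.Adj x.1 x.2) ∧
        (∀ a b : V, G.Adj a b → ((a, b) ∈ H ↔ (b, a) ∉ H)) ∧
        ∀ w : V, |(outd H w : ℤ) - (ind H w : ℤ)| ≤ 1 := by
    intro G hG
    refine ⟨∅, by simp, ?_, by simp [outd, ind]⟩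
    intro a b hab
    exact absurd (G.mem_edgeSet.mpr hab) (by simp [hG])
  intro n
  induction n with
  | zero =>
    intro G hG
    exact empty_case G ((Set.ncard_eq_zero (Set.toFinite _)).mp (Nat.le_zero.mp hG))
  | succ n IH =>
    intro G hG
    by_cases hE : G.edgeSet = ∅
    · exact empty_case G hE
    -- there is an edge
    obtain ⟨e, he⟩ := Set.nonempty_iff_ne_empty.mpr hE
    have hadj : ∃ a b : V, G.Adj a b := by
      induction e using Sym2.ind with
      | _ a b => exact ⟨a, b, G.mem_edgeSet.mp he⟩
    obtain ⟨a, b, hab⟩ := hadj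
    -- the set of lengths of trails
    set S : Set ℕ := {m | ∃ (x y : V) (q : G.Walk x y), q.IsTrail ∧ q.length = m} with hSdef
    have h1S : 1 ∈ S := by
      refine ⟨a, b, Walk.cons hab Walk.nil, ?_, by simp⟩
      rw [Walk.isTrail_cons]
      simp
    have hSfin : S.Finite := by
      apply (Set.finite_Iic (Fintype.card (Sym2 V))).subset
      rintro m ⟨x, y, q, hq, rfl⟩
      have := hq.edges_nodup.length_le_card
      rw [Walk.length_edges] at this
      exact this
    have hMmem : sSup S ∈ S := Set.Nonempty.csSup_mem ⟨1, h1S⟩ hSfin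
    have hmax : ∀ m ∈ S, m ≤ sSup S := fun m hm => le_csSup hSfin.bddAbove hm
    obtain ⟨u, v, p, hp, hplen⟩ := hMmem
    have hM1 : 1 ≤ p.length := by rw [hplen]; exact hmax 1 h1S
    -- saturation of endpoints
    have hsat : ∀ (x y : V) (q : G.Walk x y), q.IsTrail → q.length = sSup S →
        ∀ z, G.Adj x z → s(x, z) ∈ q.edges := by
      intro x y q hq hql z hxz
      by_contra hne
      have ht : (Walk.cons hxz.symm q).IsTrail := by
        rw [Walk.isTrail_cons]
        exact ⟨hq, by rwa [Sym2.eq_swap]⟩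
      have hmem : q.length + 1 ∈ S := ⟨z, y, Walk.cons hxz.symm q, ht, by simp⟩
      have := hmax _ hmem
      omega
    have hsatu : ∀ z, G.Adj u z → s(u, z) ∈ p.edges := hsat u v p hp hplen
    have hsatv : ∀ z, G.Adj v z → s(v, z) ∈ p.edges := by
      intro z hz
      have := hsat v u p.reverse (Walk.IsTrail.reverse _ hp)
        (by rw [Walk.length_reverse]; exact hplen) z hz
      rwa [Walk.edges_reverse, List.mem_reverse] at this
    -- recurse on the graph minus the trail's edges
    set G' : SimpleGraph V := G.deleteEdges {e | e ∈ p.edges} with hG'def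
    have hG'adj : ∀ {x y : V}, G'.Adj x y ↔ G.Adj x y ∧ s(x, y) ∉ p.edges := by
      intro x y
      rw [hG'def, SimpleGraph.deleteEdges_adj]
      simp
    have hG'card : G'.edgeSet.ncard ≤ n := by
      have hss : G'.edgeSet ⊂ G.edgeSet := by
        rw [hG'def, SimpleGraph.edgeSet_deleteEdges]
        refine ⟨Set.diff_subset, fun hsub => ?_⟩
        have hne : p.edges ≠ [] := by
          intro h
          have := Walk.length_edges p
          rw [h] at this
          simp at this
          omega
        obtain ⟨e0, he0⟩ := List.exists_mem_of_ne_nil _ hne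
        have he0G : e0 ∈ G.edgeSet := Walk.edges_subset_edgeSet p he0
        have := hsub he0G
        exact this.2 he0
      have := Set.ncard_lt_ncard hss (Set.toFinite _)
      omega
    obtain ⟨H', hH'1, hH'2, hH'3⟩ := IH G' hG'card
    -- the arcs of the trail
    set A : Finset (V × V) := (p.darts.map Dart.toProd).toFinset with hAdef
    have hnodup : (p.darts.map Dart.toProd).Nodup := by
      have hd : p.darts.Nodup := by
        have : p.edges = p.darts.map Dart.edge := rfl
        have hn := hp.edges_nodup
        rw [this] at hn
        exact hn.of_map _
      exact hd.map Dart.toProd_injective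
    have hAmem : ∀ {x : V × V}, x ∈ A ↔ ∃ d ∈ p.darts, d.toProd = x := by
      intro x; rw [hAdef, List.mem_toFinset, List.mem_map]
    have hAadj : ∀ x ∈ A, G.Adj x.1 x.2 := by
      intro x hx
      obtain ⟨d, _, rfl⟩ := hAmem.mp hx
      exact d.adj
    have hAedge : ∀ x ∈ A, s(x.1, x.2) ∈ p.edges := by
      intro x hx
      obtain ⟨d, hd, rfl⟩ := hAmem.mp hx
      have : p.edges = p.darts.map Dart.edge := rfl
      rw [this]
      exact List.mem_map.mpr ⟨d, hd, rfl⟩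
    have hA_once : ∀ c d : V, (c, d) ∈ A → (d, c) ∈ A → c = d := by
      intro c d h1 h2
      obtain ⟨d1, hd1, hd1e⟩ := hAmem.mp h1
      obtain ⟨d2, hd2, hd2e⟩ := hAmem.mp h2
      have hedges : (p.darts.map Dart.edge).Nodup := hp.edges_nodup
      have heq : d1.edge = d2.edge := by
        have e1 : d1.edge = s(c, d) := by rw [Dart.edge, hd1e]
        have e2 : d2.edge = s(d, c) := by rw [Dart.edge, hd2e]
        rw [e1, e2, Sym2.eq_swap]
      have := List.inj_on_of_nodup_map hedges hd1 hd2 heq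
      rw [this, hd2e] at hd1e
      exact (Prod.mk.injEq _ _ _ _).mp hd1e.symm |>.1
    have hedge_mem : ∀ c d : V, s(c, d) ∈ p.edges → (c, d) ∈ A ∨ (d, c) ∈ A := by
      intro c d hcd
      have : p.edges = p.darts.map Dart.edge := rfl
      rw [this, List.mem_map] at hcd
      obtain ⟨dd, hdd, hdde⟩ := hcd
      rcases dart_edge_eq_mk'_iff'.mp hdde with ⟨h1, h2⟩ | ⟨h1, h2⟩
      · left; exact hAmem.mpr ⟨dd, hdd, by rw [← h1, ← h2]⟩
      · right; exact hAmem.mpr ⟨dd, hdd, by rw [← h1, ← h2]⟩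
    have hnH' : ∀ c d : V, s(c, d) ∈ p.edges → (c, d) ∉ H' := by
      intro c d h hc
      exact (hG'adj.mp (hH'1 _ hc)).2 h
    have hdisj : Disjoint H' A := by
      rw [Finset.disjoint_left]
      intro x hx1 hx2
      exact hnH' x.1 x.2 (hAedge x hx2) hx1
    refine ⟨H' ∪ A, ?_, ?_, ?_⟩
    · intro x hx
      rcases Finset.mem_union.mp hx with h | h
      · exact (hG'adj.mp (hH'1 x h)).1
      · exact hAadj x h
    · intro c d hcd
      by_cases he : s(c, d) ∈ p.edges
      · constructor
        · intro hmem hmem'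
          have hcdA : (c, d) ∈ A := by
            rcases Finset.mem_union.mp hmem with h | h
            · exact absurd h (hnH' c d he)
            · exact h
          have hdcA : (d, c) ∈ A := by
            rcases Finset.mem_union.mp hmem' with h | h
            · exact absurd h (hnH' d c (by rwa [Sym2.eq_swap]))
            · exact h
          exact hcd.ne (hA_once c d hcdA hdcA)
        · intro hmem'
          rcases hedge_mem c d he with h | h
          · exact Finset.mem_union_right _ h
          · exact absurd (Finset.mem_union_right _ h) hmem'
      · have ha' : G'.Adj c d := hG'adj.mpr ⟨hcd, he⟩
        have h2 := hH'2 c d ha'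
        have hnA1 : (c, d) ∉ A := fun h => he (hAedge _ h)
        have hnA2 : (d, c) ∉ A := fun h => he (by
          have := hAedge _ h
          rwa [Sym2.eq_swap] at this)
        constructor
        · intro hmem hmem'
          have h1 : (c, d) ∈ H' := by
            rcases Finset.mem_union.mp hmem with h | h
            · exact h
            · exact absurd h hnA1
          have hdc : (d, c) ∈ H' := by
            rcases Finset.mem_union.mp hmem' with h | h
            · exact h
            · exact absurd h hnA2
          exact (h2.mp h1) hdc
        · intro hmem'
          have hdc : (d, c) ∉ H' := fun h => hmem' (Finset.mem_union_left _ h)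
          exact Finset.mem_union_left _ (h2.mpr hdc)
    · intro w
      -- counting
      have hcard : ∀ (q : V × V → Prop) [DecidablePred q],
          ((H' ∪ A).filter q).card = (H'.filter q).card + (A.filter q).card := by
        intro q hq
        rw [Finset.filter_union]
        exact Finset.card_union_of_disjoint (Finset.disjoint_filter_filter hdisj)
      have hAcount1 : (A.filter fun x => x.1 = w).card
          = p.darts.countP (fun d => d.toProd.1 = w) := by
        rw [hAdef, card_filter_toFinset _ hnodup, List.countP_map]
        rfl
      have hAcount2 : (A.filter fun x => x.2 = w).card
          = p.darts.countP (fun d => d.toProd.2 = w) := by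
        rw [hAdef, card_filter_toFinset _ hnodup, List.countP_map]
        rfl
      have hout : (outd (H' ∪ A) w : ℤ) = outd H' w + p.darts.countP (fun d => d.toProd.1 = w) := by
        rw [outd, outd, hcard, hAcount1]
        push_cast
        rfl
      have hin : (ind (H' ∪ A) w : ℤ) = ind H' w + p.darts.countP (fun d => d.toProd.2 = w) := by
        rw [ind, ind, hcard, hAcount2]
        push_cast
        rfl
      have hdc := dart_countP p w
      have hkey : (outd (H' ∪ A) w : ℤ) - ind (H' ∪ A) w =
          ((outd H' w : ℤ) - ind H' w) +
            ((if u = w then 1 else 0) - (if v = w then 1 else 0)) := by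
        rw [hout, hin]; omega
      by_cases huv : u = v
      · subst huv
        rw [hkey]
        simpa using hH'3 w
      · -- endpoints are isolated in G'
        have hiso : ∀ z zz : V, (z = u ∨ z = v) → ¬ G'.Adj z zz := by
          intro z zz hz hadj'
          obtain ⟨h1, h2⟩ := hG'adj.mp hadj'
          rcases hz with rfl | rfl
          · exact h2 (hsatu zz h1)
          · exact h2 (hsatv zz h1)
        have hzero : ∀ z : V, (z = u ∨ z = v) → outd H' z = 0 ∧ ind H' z = 0 := by
          intro z hz
          constructor
          · rw [outd, Finset.card_eq_zero]
            apply Finset.filter_eq_empty_iff.mpr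
            intro x hx h1
            exact hiso z x.2 hz (h1 ▸ hH'1 x hx)
          · rw [ind, Finset.card_eq_zero]
            apply Finset.filter_eq_empty_iff.mpr
            intro x hx h2
            exact hiso z x.1 hz ((h2 ▸ hH'1 x hx).symm)
        by_cases hwu : w = u
        · obtain ⟨h1, h2⟩ := hzero w (Or.inl hwu)
          rw [hkey, h1, h2]
          have : v ≠ w := fun h => huv (hwu ▸ h).symm
          simp [hwu.symm, if_neg this]
        · by_cases hwv : w = v
          · obtain ⟨h1, h2⟩ := hzero w (Or.inr hwv)
            rw [hkey, h1, h2]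
            have : u ≠ w := fun h => huv (h.trans hwv)
            simp [hwv.symm, if_neg this]
          · rw [hkey, if_neg (fun h => hwu h.symm), if_neg (fun h => hwv h.symm)]
            simpa using hH'3 w

lemma cut_bound (H : Finset (V × V))
    (hbal : ∀ w : V, |(outd H w : ℤ) - (ind H w : ℤ)| ≤ 1) (U : Finset V) :
    |((H.filter fun p => p.1 ∈ U ∧ p.2 ∉ U).card : ℤ) -
      ((H.filter fun p => p.1 ∉ U ∧ p.2 ∈ U).card : ℤ)| ≤ Fintype.card V := by
  classical
  have hout : (H.filter fun p => p.1 ∈ U).card = ∑ w ∈ U, outd H w := by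
    have hfib : ∀ x ∈ H.filter (fun p : V × V => p.1 ∈ U), (fun p : V × V => p.1) x ∈ U := by
      intro x hx; exact (Finset.mem_filter.mp hx).2
    rw [Finset.card_eq_sum_card_fiberwise hfib]
    refine Finset.sum_congr rfl fun w hw => ?_
    rw [outd, Finset.filter_filter]
    congr 1
    ext x
    simp only [Finset.mem_filter]
    constructor
    · rintro ⟨hx, _, h2⟩; exact ⟨hx, h2⟩
    · rintro ⟨hx, h2⟩; exact ⟨hx, h2 ▸ hw, h2⟩
  have hin : (H.filter fun p => p.2 ∈ U).card = ∑ w ∈ U, ind H w := by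
    have hfib : ∀ x ∈ H.filter (fun p : V × V => p.2 ∈ U), (fun p : V × V => p.2) x ∈ U := by
      intro x hx; exact (Finset.mem_filter.mp hx).2
    rw [Finset.card_eq_sum_card_fiberwise hfib]
    refine Finset.sum_congr rfl fun w hw => ?_
    rw [ind, Finset.filter_filter]
    congr 1
    ext x
    simp only [Finset.mem_filter]
    constructor
    · rintro ⟨hx, _, h2⟩; exact ⟨hx, h2⟩
    · rintro ⟨hx, h2⟩; exact ⟨hx, h2 ▸ hw, h2⟩
  have hsplit1 : (H.filter fun p => p.1 ∈ U ∧ p.2 ∉ U).card +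
      (H.filter fun p => p.1 ∈ U ∧ p.2 ∈ U).card = (H.filter fun p => p.1 ∈ U).card := by
    have h := Finset.card_filter_add_card_filter_not
      (s := H.filter fun p => p.1 ∈ U) (fun p : V × V => p.2 ∈ U)
    rw [Finset.filter_filter, Finset.filter_filter] at h
    omega
  have hsplit2 : (H.filter fun p => p.1 ∉ U ∧ p.2 ∈ U).card +
      (H.filter fun p => p.1 ∈ U ∧ p.2 ∈ U).card = (H.filter fun p => p.2 ∈ U).card := by
    have h := Finset.card_filter_add_card_filter_not
      (s := H.filter fun p => p.2 ∈ U) (fun p : V × V => p.1 ∈ U)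
    rw [Finset.filter_filter, Finset.filter_filter] at h
    have e1 : (H.filter fun p => p.2 ∈ U ∧ p.1 ∈ U) = H.filter fun p => p.1 ∈ U ∧ p.2 ∈ U := by
      apply Finset.filter_congr; intro x _; exact and_comm
    have e2 : (H.filter fun p => p.2 ∈ U ∧ p.1 ∉ U) = H.filter fun p => p.1 ∉ U ∧ p.2 ∈ U := by
      apply Finset.filter_congr; intro x _; exact and_comm
    rw [e1, e2] at h
    omega
  have hdiff : ((H.filter fun p => p.1 ∈ U ∧ p.2 ∉ U).card : ℤ) -
      ((H.filter fun p => p.1 ∉ U ∧ p.2 ∈ U).card : ℤ) =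
      ∑ w ∈ U, ((outd H w : ℤ) - (ind H w : ℤ)) := by
    rw [Finset.sum_sub_distrib, ← Nat.cast_sum, ← Nat.cast_sum, ← hout, ← hin]
    omega
  rw [hdiff]
  calc |∑ w ∈ U, ((outd H w : ℤ) - (ind H w : ℤ))|
      ≤ ∑ w ∈ U, |(outd H w : ℤ) - (ind H w : ℤ)| := Finset.abs_sum_le_sum_abs _ _
    _ ≤ ∑ _w ∈ U, 1 := Finset.sum_le_sum fun w _ => hbal w
    _ = U.card := by simp
    _ ≤ Fintype.card V := by
        exact_mod_cast le_trans (Finset.card_le_univ U) (le_of_eq Finset.card_univ)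

end Stmt6Aux

/-- Let `G` be an undirected graph on `n` vertices with `m` edges, and let `δ > 0`
and `k ≤ m` satisfy `n < kδ²/6`. Then there exists an orientation `H` of `G`
(for each edge exactly one of the two directions is an arc of `H`) such that
every cut of `H` of size at least `k` is `δ`-balanced, i.e. for every vertex
partition `(U, Uᶜ)`, if `e(U,Uᶜ) + e(Uᶜ,U) ≥ k` then
`|e(U,Uᶜ) - e(Uᶜ,U)| ≤ δ·(e(U,Uᶜ) + e(Uᶜ,U))/2`. -/
theorem stmt_6 {V : Type*} [Fintype V] [DecidableEq V] (G : SimpleGraph V)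
    [DecidableRel G.Adj] (k : ℕ) (δ : ℝ) (hδ : 0 < δ)
    (hk : k ≤ G.edgeFinset.card)
    (hn : (Fintype.card V : ℝ) < k * δ ^ 2 / 6) :
    ∃ H : Finset (V × V),
      (∀ p ∈ H, G.Adj p.1 p.2) ∧
      (∀ a b : V, G.Adj a b → ((a, b) ∈ H ↔ (b, a) ∉ H)) ∧
      ∀ U : Finset V,
        (k : ℝ) ≤ ((H.filter fun p => p.1 ∈ U ∧ p.2 ∉ U).card : ℝ) +
            ((H.filter fun p => p.1 ∉ U ∧ p.2 ∈ U).card : ℝ) →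
        |((H.filter fun p => p.1 ∈ U ∧ p.2 ∉ U).card : ℝ) -
            ((H.filter fun p => p.1 ∉ U ∧ p.2 ∈ U).card : ℝ)| ≤
          δ * (((H.filter fun p => p.1 ∈ U ∧ p.2 ∉ U).card : ℝ) +
            ((H.filter fun p => p.1 ∉ U ∧ p.2 ∈ U).card : ℝ)) / 2 := by
  classical
  obtain ⟨H, h1, h2, h3⟩ :=
    Stmt6Aux.exists_balanced_orientation_aux G.edgeSet.ncard G le_rfl
  refine ⟨H, h1, h2, ?_⟩
  intro U hU
  have hbound := Stmt6Aux.cut_bound H h3 U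
  set aN := (H.filter fun p => p.1 ∈ U ∧ p.2 ∉ U).card with haN
  set bN := (H.filter fun p => p.1 ∉ U ∧ p.2 ∈ U).card with hbN
  have hR : |(aN : ℝ) - (bN : ℝ)| ≤ (Fintype.card V : ℝ) := by
    have : ((|(aN : ℤ) - (bN : ℤ)| : ℤ) : ℝ) ≤ ((Fintype.card V : ℤ) : ℝ) := by
      exact_mod_cast hbound
    rwa [Int.cast_abs, Int.cast_sub, Int.cast_natCast, Int.cast_natCast, Int.cast_natCast] at this
  have ha0 : (0 : ℝ) ≤ (aN : ℝ) := Nat.cast_nonneg _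
  have hb0 : (0 : ℝ) ≤ (bN : ℝ) := Nat.cast_nonneg _
  have hk0 : (0 : ℝ) ≤ (k : ℝ) := Nat.cast_nonneg _
  rcases le_total δ 2 with h2d | h2d
  · refine le_trans hR ?_
    have hstep : (Fintype.card V : ℝ) < k * δ / 3 := by nlinarith
    have hstep2 : (k : ℝ) * δ / 3 ≤ δ * ((aN : ℝ) + bN) / 2 := by nlinarith
    linarith
  · have habs : |(aN : ℝ) - (bN : ℝ)| ≤ (aN : ℝ) + bN := by
      rw [abs_le]; constructor <;> linarith
    refine le_trans habs ?_
    nlinarith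
end

section
/- Suppose H is a directed graph with m edges that is (m/4, δ)-balanced and whose underlying undirected graph G satisfies f(G) ≤ m/2 + c'·m^{4/5}. Then every directed cut of H has size at most m/4 + (c'/2 + δ·m^{1/5}/4)·m^{4/5}. -/
/-- The number of arcs of the digraph `H` from `U` to its complement. -/
def dicutCard {V : Type*} [DecidableEq V] (H : Finset (V × V)) (U : Finset V) : ℕ :=
  (H.filter fun p => p.1 ∈ U ∧ p.2 ∉ U).card

/-- Suppose `H` is a directed graph with `m` arcs that is `(m/4, δ)`-balanced and
whose underlying undirected graph `G` satisfies `f(G) ≤ m/2 + c'·m^{4/5}` (every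
undirected cut `e(U,V) + e(V,U)` is at most `m/2 + c'·m^{4/5}`). Then every
directed cut of `H` has size at most `m/4 + (c'/2 + δ·m^{1/5}/4)·m^{4/5}`. -/
theorem stmt_7 {V : Type*} [Fintype V] [DecidableEq V] (H : Finset (V × V))
    (m : ℕ) (hm : H.card = m) (δ c' : ℝ) (hδ : 0 ≤ δ) (hc' : 0 ≤ c')
    (hbal : ∀ U : Finset V,
      (m : ℝ) / 4 ≤ (dicutCard H U : ℝ) + (dicutCard H Uᶜ : ℝ) →
      |(dicutCard H U : ℝ) - (dicutCard H Uᶜ : ℝ)| ≤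
        δ * ((dicutCard H U : ℝ) + (dicutCard H Uᶜ : ℝ)) / 2)
    (hf : ∀ U : Finset V,
      (dicutCard H U : ℝ) + (dicutCard H Uᶜ : ℝ) ≤
        (m : ℝ) / 2 + c' * (m : ℝ) ^ ((4 : ℝ) / 5)) :
    ∀ U : Finset V,
      (dicutCard H U : ℝ) ≤
        (m : ℝ) / 4 +
          (c' / 2 + δ * (m : ℝ) ^ ((1 : ℝ) / 5) / 4) * (m : ℝ) ^ ((4 : ℝ) / 5) := by
  intro U
  set a : ℝ := (dicutCard H U : ℝ) with ha
  set b : ℝ := (dicutCard H Uᶜ : ℝ) with hb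
  have ha0 : 0 ≤ a := Nat.cast_nonneg _
  have hb0 : 0 ≤ b := Nat.cast_nonneg _
  have hm0 : (0:ℝ) ≤ (m:ℝ) := Nat.cast_nonneg _
  have hr4 : (0:ℝ) ≤ (m : ℝ) ^ ((4 : ℝ) / 5) := Real.rpow_nonneg hm0 _
  have hr1 : (0:ℝ) ≤ (m : ℝ) ^ ((1 : ℝ) / 5) := Real.rpow_nonneg hm0 _
  have hmul : (m : ℝ) ^ ((1 : ℝ) / 5) * (m : ℝ) ^ ((4 : ℝ) / 5) = (m : ℝ) := by
    rw [← Real.rpow_add' hm0 (by norm_num)]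
    norm_num
  -- a + b ≤ m
  have hab_m : a + b ≤ (m : ℝ) := by
    rw [ha, hb, ← hm]
    have : dicutCard H U + dicutCard H Uᶜ ≤ H.card := by
      unfold dicutCard
      rw [← Finset.card_union_of_disjoint]
      · exact Finset.card_le_card (Finset.union_subset (Finset.filter_subset _ _)
          (Finset.filter_subset _ _))
      · rw [Finset.disjoint_left]
        intro p hp hq
        simp only [Finset.mem_filter, Finset.mem_compl] at hp hq
        exact hq.2.1 hp.2.1
    exact_mod_cast this
  by_cases hcase : (m : ℝ) / 4 ≤ a + b
  · have hbal' := hbal U hcase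
    have hf' := hf U
    have h1 : a - b ≤ δ * (a + b) / 2 := le_trans (le_abs_self _) hbal'
    have h2 : δ * (a + b) / 2 ≤ δ * (m : ℝ) / 2 := by
      have := mul_le_mul_of_nonneg_left hab_m hδ
      linarith
    have h3 : a = ((a + b) + (a - b)) / 2 := by ring
    have : a ≤ ((m : ℝ) / 2 + c' * (m : ℝ) ^ ((4 : ℝ) / 5) + δ * (m : ℝ) / 2) / 2 := by
      rw [h3]; linarith
    calc a ≤ ((m : ℝ) / 2 + c' * (m : ℝ) ^ ((4 : ℝ) / 5) + δ * (m : ℝ) / 2) / 2 := this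
      _ = (m : ℝ) / 4 + (c' / 2 + δ * (m : ℝ) ^ ((1 : ℝ) / 5) / 4) * (m : ℝ) ^ ((4 : ℝ) / 5) := by
          linear_combination (-δ / 4) * hmul
  · push_neg at hcase
    have : a ≤ (m : ℝ) / 4 := by linarith
    have hnn : 0 ≤ (c' / 2 + δ * (m : ℝ) ^ ((1 : ℝ) / 5) / 4) * (m : ℝ) ^ ((4 : ℝ) / 5) := by
      apply mul_nonneg (by positivity) hr4
    linarith
end

section
/- If T is a maximum transitive subgraph of a digraph D whose underlying undirected graph is triangle-free, and the maximum directed cut of D has size g(D), then |T| = g(D). -/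
/-- If `T` is a maximum transitive subgraph of a loopless digraph `D` whose
underlying undirected graph is triangle-free, and the maximum directed cut of `D`
has size `g`, then `|T| = g`. -/
theorem stmt_15 {V : Type*} [Fintype V] [DecidableEq V] (D : Finset (V × V))
    (hirr : ∀ a : V, (a, a) ∉ D)
    (htf : ∀ a b c : V, a ≠ b → b ≠ c → a ≠ c →
      ¬ (((a, b) ∈ D ∨ (b, a) ∈ D) ∧ ((b, c) ∈ D ∨ (c, b) ∈ D) ∧
         ((a, c) ∈ D ∨ (c, a) ∈ D)))
    (T : Finset (V × V)) (hTD : T ⊆ D)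
    (hTtrans : ∀ a b c : V, (a, b) ∈ T → (b, c) ∈ T → (a, c) ∈ T)
    (hTmax : ∀ T' ⊆ D, (∀ a b c : V, (a, b) ∈ T' → (b, c) ∈ T' → (a, c) ∈ T') →
      T'.card ≤ T.card)
    (g : ℕ)
    (hg1 : ∃ U : Finset V, (D.filter fun p => p.1 ∈ U ∧ p.2 ∉ U).card = g)
    (hg2 : ∀ U : Finset V, (D.filter fun p => p.1 ∈ U ∧ p.2 ∉ U).card ≤ g) :
    T.card = g := by
  obtain ⟨U0, hU0⟩ := hg1
  apply le_antisymm
  · set U : Finset V := T.image Prod.fst with hU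
    have hsub : T ⊆ D.filter fun p => p.1 ∈ U ∧ p.2 ∉ U := by
      intro p hp
      obtain ⟨a, b⟩ := p
      refine Finset.mem_filter.2 ⟨hTD hp, Finset.mem_image.2 ⟨(a, b), hp, rfl⟩, ?_⟩
      intro hb
      obtain ⟨q, hq, hq2⟩ := Finset.mem_image.1 hb
      obtain ⟨b', c⟩ := q
      simp only at hq2
      rw [hq2] at hq
      have hac := hTtrans a b c hp hq
      have hab : a ≠ b := by rintro rfl; exact hirr a (hTD hp)
      have hbc : b ≠ c := by rintro rfl; exact hirr b (hTD hq)
      have hacne : a ≠ c := by rintro rfl; exact hirr a (hTD (hTtrans a b a hp hq))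
      exact htf a b c hab hbc hacne ⟨Or.inl (hTD hp), Or.inl (hTD hq), Or.inl (hTD hac)⟩
    calc T.card ≤ _ := Finset.card_le_card hsub
      _ ≤ g := hg2 U
  · rw [← hU0]
    apply hTmax
    · exact Finset.filter_subset _ _
    · intro a b c h1 h2
      simp only [Finset.mem_filter] at h1 h2
      exact absurd h2.2.1 h1.2.2
end
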